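/- arXiv:1404.3796 — 7 statements merged into one kernel-verified Lean document; each statement's English description precedes it below -/
import Mathlib

section
/- For any homomorphism φ of A⋈^f J-modules from A to A⋈^f J, if φ(1) = (a, f(a)+x) with a ∈ A and x ∈ J, then f(a)+x annihilates J in B. -/
section Amalg
variable {A B : Type*} [CommRing A] [CommRing B]

/-- The amalgamation `A ⋈^f J = {(a, f a + j) | a ∈ A, j ∈ J}` as a subring of `A × B`. -/
def amalg (f : A →+* B) (J : Ideal B) : Subring (A × B) where
  carrier := {x | x.2 - f x.1 ∈ J}
  one_mem' := by simp
  zero_mem' := by simp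
  mul_mem' := by
    rintro x y hx hy
    show (x * y).2 - f (x * y).1 ∈ J
    have h : (x * y).2 - f (x * y).1 = x.2 * (y.2 - f y.1) + (x.2 - f x.1) * f y.1 := by
      simp only [Prod.fst_mul, Prod.snd_mul, map_mul]; ring
    rw [h]
    exact J.add_mem (J.mul_mem_left _ hy) (J.mul_mem_right _ hx)
  add_mem' := by
    rintro x y hx hy
    show (x + y).2 - f (x + y).1 ∈ J
    have h : (x + y).2 - f (x + y).1 = (x.2 - f x.1) + (y.2 - f y.1) := by
      simp only [Prod.fst_add, Prod.snd_add, map_add]; ring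
    rw [h]; exact J.add_mem hx hy
  neg_mem' := by
    intro x hx
    show (-x).2 - f (-x).1 ∈ J
    have h : (-x).2 - f (-x).1 = -(x.2 - f x.1) := by
      simp only [Prod.fst_neg, Prod.snd_neg, map_neg]; ring
    rw [h]; exact J.neg_mem hx

/-- The canonical embedding `A → A ⋈^f J`, `a ↦ (a, f a)`. -/
def amalgIota (f : A →+* B) (J : Ideal B) : A →+* amalg f J :=
  ((RingHom.id A).prod f).codRestrict (amalg f J) (fun a =>
    show (a, f a).2 - f (a, f a).1 ∈ J by simp)

/-- The projection `A ⋈^f J → A`. -/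
def amalgFst (f : A →+* B) (J : Ideal B) : amalg f J →+* A :=
  (RingHom.fst A B).comp (amalg f J).subtype

end Amalg

set_option synthInstance.maxHeartbeats 1000000
set_option maxHeartbeats 1000000

/-- For any homomorphism `φ` of `A⋈^f J`-modules from `A` to `A⋈^f J`,
if `φ 1 = (a, f a + x)` with `a ∈ A`, `x ∈ J`, then `f a + x` annihilates `J` in `B`. -/
theorem image_one_annihilates {A B : Type*} [CommRing A] [CommRing B]
    (f : A →+* B) (J : Ideal B) :
    letI : Module (amalg f J) A := Module.compHom A (amalgFst f J)
    ∀ (φ : A →ₗ[amalg f J] amalg f J) (a : A) (x : B), x ∈ J →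
      ((φ 1 : amalg f J) : A × B) = (a, f a + x) → f a + x ∈ J.annihilator := by
  letI : Module (amalg f J) A := Module.compHom A (amalgFst f J)
  intro φ a x hx hφ
  rw [Submodule.mem_annihilator]
  intro n hn
  -- r = (0, n) ∈ amalg f J
  have hr : ((0 : A), (n : B)).2 - f ((0:A), (n:B)).1 ∈ J := by simpa using hn
  set r : amalg f J := ⟨((0:A), (n:B)), hr⟩ with hrdef
  have h1 : r • (1 : A) = 0 := by
    show (amalgFst f J r) • (1 : A) = 0
    simp [amalgFst, hrdef]
  have h2 : r • φ 1 = 0 := by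
    rw [← map_smul, h1, map_zero]
  have h3 : r * φ 1 = 0 := h2
  have h4 : ((r * φ 1 : amalg f J) : A × B) = 0 := by rw [h3]; rfl
  have h5 : (n : B) * (f a + x) = 0 := by
    have := congrArg Prod.snd h4
    simpa [hrdef, hφ] using this
  show (f a + x) • n = 0
  rw [smul_eq_mul, mul_comm]
  exact h5
end

section
/- If A⋈^f J is self-injective (where f is injective and J ⊆ f(A)), then the inclusion J ↪ B splits as a map of A-modules, so B = J ⊕ C for some complement, and J is a principal ideal of B generated by an idempotent. -/
set_option synthInstance.maxHeartbeats 1000000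
set_option maxHeartbeats 1000000

/-- If `A⋈^f J` is self-injective (with `f` injective, `J ⊆ f(A)`), then the
inclusion `J ↪ B` splits as a map of `A`-modules, `B = J ⊕ C` for some complement `C`,
and `J` is principal, generated by an idempotent. -/
theorem amalg_selfInjective_splits {A B : Type*} [CommRing A] [CommRing B]
    (f : A →+* B) (J : Ideal B) (hf : Function.Injective f)
    (hJ : (J : Set B) ⊆ Set.range f)
    (hself : Module.Injective (amalg f J) (amalg f J)) :
    letI : Algebra A B := f.toAlgebra
    ((∃ g : B →ₗ[A] ↥(J.restrictScalars A), ∀ j : ↥(J.restrictScalars A), g ↑j = j) ∧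
     (∃ C : Submodule A B, IsCompl (J.restrictScalars A) C) ∧
     (∃ e : B, IsIdempotentElem e ∧ J = Ideal.span {e})) := by
  letI : Algebra A B := f.toAlgebra
  -- the inclusion of the amalgamation into `A × B` as a linear map
  let i : (amalg f J) →ₗ[amalg f J] (A × B) :=
    { toFun := Subtype.val
      map_add' := fun x y => rfl
      map_smul' := fun r x => rfl }
  have hi : Function.Injective i := Subtype.val_injective
  obtain ⟨Ψ, hΨ⟩ := hself.out i hi LinearMap.id
  have hΨ' : ∀ x : amalg f J, Ψ (x : A × B) = x := fun x => hΨ x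
  -- the image of (0,1)
  set pq : amalg f J := Ψ ((0 : A), (1 : B)) with hpq
  set p : A := (pq : A × B).1 with hp
  set q : B := (pq : A × B).2 with hq
  have hmem : q - f p ∈ J := pq.2
  -- key fact 1 : multiplication by q is the identity on J
  have fact1 : ∀ j ∈ J, j * q = j := by
    intro j hj
    have hrj : (((0 : A), j) : A × B) ∈ amalg f J := by
      show j - f 0 ∈ J; simpa using hj
    let rj : amalg f J := ⟨(0, j), hrj⟩
    have h1 : rj • (((0 : A), (1 : B)) : A × B) = ((0 : A), j) := by
      show (((0 : A), j) : A × B) * (0, 1) = (0, j)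
      ext <;> simp
    have h2 : Ψ ((0 : A), j) = rj • pq := by
      rw [← h1, map_smul, hpq]
    have h3 : Ψ ((0 : A), j) = rj := hΨ' rj
    have h5 : rj • pq = rj := h2.symm.trans h3
    have h4 : (rj : A × B) * (pq : A × B) = (rj : A × B) := by
      have h6 := congrArg Subtype.val h5
      rwa [show ((rj • pq : amalg f J) : A × B) = (rj : A × B) * (pq : A × B) from rfl] at h6
    have := congrArg Prod.snd h4
    simpa using this
  -- key fact 2 : p annihilates f ⁻¹ J
  have fact2 : ∀ c : A, f c ∈ J → c * p = 0 := by
    intro c hc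
    have hrc : ((c, f c) : A × B) ∈ amalg f J := by
      show f c - f c ∈ J; simp
    let rc : amalg f J := ⟨(c, f c), hrc⟩
    have h1 : rc • (((0 : A), (1 : B)) : A × B) = ((0 : A), f c) := by
      show ((c, f c) : A × B) * (0, 1) = (0, f c)
      ext <;> simp
    have h2 : Ψ ((0 : A), f c) = rc • pq := by rw [← h1, map_smul, hpq]
    have hrfc : (((0 : A), f c) : A × B) ∈ amalg f J := by
      show f c - f 0 ∈ J; simpa using hc
    have h3 : Ψ ((0 : A), f c) = (⟨(0, f c), hrfc⟩ : amalg f J) :=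
      hΨ' (⟨(0, f c), hrfc⟩ : amalg f J)
    have h5 : rc • pq = (⟨(0, f c), hrfc⟩ : amalg f J) := h2.symm.trans h3
    have h4 : (rc : A × B) * (pq : A × B) = (((0 : A), f c) : A × B) := by
      have h6 := congrArg Subtype.val h5
      rwa [show ((rc • pq : amalg f J) : A × B) = (rc : A × B) * (pq : A × B) from rfl] at h6
    have := congrArg Prod.fst h4
    simpa using this
  -- the idempotent
  set e : B := q - f p with he
  have heJ : e ∈ J := hmem
  obtain ⟨c₀, hc₀⟩ := hJ heJ
  have hc₀I : f c₀ ∈ J := by rw [hc₀]; exact heJ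
  have hfpe : f p * e = 0 := by
    rw [← hc₀, ← map_mul, mul_comm p c₀, fact2 c₀ hc₀I, map_zero]
  have hidem : IsIdempotentElem e := by
    show e * e = e
    calc e * e = e * q - f p * e := by rw [he]; ring
    _ = e - 0 := by rw [fact1 e heJ, hfpe]
    _ = e := by ring
  -- every element of J is a multiple of e
  have hmul : ∀ j ∈ J, e * j = j := by
    intro j hj
    obtain ⟨c, hc⟩ := hJ hj
    have hfpj : f p * j = 0 := by
      rw [← hc, ← map_mul, mul_comm p c, fact2 c (by rw [hc]; exact hj), map_zero]
    calc e * j = j * q - f p * j := by rw [he]; ring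
    _ = j - 0 := by rw [fact1 j hj, hfpj]
    _ = j := by ring
  have hspan : J = Ideal.span {e} := by
    apply le_antisymm
    · intro j hj
      rw [Ideal.mem_span_singleton]
      exact ⟨j, (hmul j hj).symm⟩
    · rw [Ideal.span_le, Set.singleton_subset_iff]
      exact heJ
  -- the retraction
  let g : B →ₗ[A] ↥(J.restrictScalars A) :=
    { toFun := fun b => ⟨e * b, J.mul_mem_right b heJ⟩
      map_add' := fun x y => by ext; show e * (x + y) = e * x + e * y; ring
      map_smul' := fun a b => by
        ext
        show e * (a • b) = a • (e * b)
        rw [Algebra.smul_def, Algebra.smul_def]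
        ring }
  have hg : ∀ j : ↥(J.restrictScalars A), g ↑j = j := by
    intro j
    ext
    exact hmul j.1 j.2
  exact ⟨⟨g, hg⟩, ⟨LinearMap.ker g, LinearMap.isCompl_of_proj hg⟩, ⟨e, hidem, hspan⟩⟩
end

section
/- Let B be a local ring, f : A → B an injective ring homomorphism, and J a nonzero proper ideal of B with J ⊆ f(A). Then A⋈^f J is not a self-injective ring. -/
/-!
Multiplication by the idempotent `(1, 0)` of `A × B` maps the ideal `f⁻¹(J) ×_B J` of `A ⋈^f J`
into `A ⋈^f J`. If `A ⋈^f J` were self-injective, this map would be multiplication by some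
`r ∈ A ⋈^f J`. Comparing coordinates on the elements `(a, 0)` and `(0, f a)` with `f a ∈ J` shows
that `k = r.2 - f r.1 ∈ J` satisfies `j * (1 + k) = 0` for all `j ∈ J`; when `J` lies in the
Jacobson radical, `1 + k` is a unit and hence `J = 0`.
-/

theorem Module.Injective.exists_eq_mul {R : Type*} [CommRing R] [Module.Injective R R]
    (I : Ideal R) (g : I →ₗ[R] R) : ∃ r : R, ∀ x : I, g x = x * r := by
  obtain ⟨h, hh⟩ := Module.Injective.out I.subtype I.injective_subtype g
  refine ⟨h 1, fun x => ?_⟩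
  rw [← hh, ← smul_eq_mul, ← map_smul, smul_eq_mul, mul_one, Submodule.subtype_apply]

namespace amalg

variable {A B : Type*} [CommRing A] [CommRing B] {f : A →+* B} {J : Ideal B}

theorem mem_iff {x : A × B} : x ∈ amalg f J ↔ x.2 - f x.1 ∈ J := Iff.rfl

theorem mk_zero_mem {a : A} (ha : f a ∈ J) : (a, 0) ∈ amalg f J := by
  simpa [mem_iff] using J.neg_mem ha

theorem zero_mk_mem {b : B} (hb : b ∈ J) : (0, b) ∈ amalg f J := by
  simpa [mem_iff] using hb

variable (f J) in
/-- The ideal `f⁻¹(J) ×_B J` of `A ⋈^f J`. -/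
def fstIdeal : Ideal (amalg f J) := (J.comap f).comap (amalgFst f J)

theorem mem_fstIdeal {x : amalg f J} : x ∈ fstIdeal f J ↔ f (x : A × B).1 ∈ J := Iff.rfl

variable (f J) in
def projFst : fstIdeal f J →ₗ[amalg f J] amalg f J where
  toFun x := ⟨(((x : amalg f J) : A × B).1, 0), mk_zero_mem x.2⟩
  map_add' _ _ := Subtype.ext (Prod.ext rfl (add_zero 0).symm)
  map_smul' _ _ := Subtype.ext (Prod.ext rfl (mul_zero _).symm)

theorem fst_mul_eq_and_snd_mul_eq_zero {r : amalg f J} (hr : ∀ x, projFst f J x = x * r)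
    {x : amalg f J} (hx : x ∈ fstIdeal f J) :
    (x : A × B).1 * (r : A × B).1 = (x : A × B).1 ∧ (x : A × B).2 * (r : A × B).2 = 0 := by
  have h := congrArg (fun y : amalg f J => (y : A × B)) (hr ⟨x, hx⟩)
  simp only [projFst, LinearMap.coe_mk, AddHom.coe_mk, Subring.coe_mul, Prod.ext_iff,
    Prod.fst_mul, Prod.snd_mul] at h
  exact ⟨h.1.symm, h.2.symm⟩

theorem mul_one_add_eq_zero {r : amalg f J} (hr : ∀ x, projFst f J x = x * r)
    (hJ : (J : Set B) ⊆ Set.range f) {j : B} (hj : j ∈ J) :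
    j * (1 + ((r : A × B).2 - f (r : A × B).1)) = 0 := by
  obtain ⟨a, rfl⟩ := hJ hj
  have hfst := (fst_mul_eq_and_snd_mul_eq_zero hr
    (x := ⟨(a, 0), mk_zero_mem hj⟩) (mem_fstIdeal.2 hj)).1
  have hsnd := (fst_mul_eq_and_snd_mul_eq_zero hr
    (x := ⟨(0, f a), zero_mk_mem hj⟩) (mem_fstIdeal.2 (by simp))).2
  dsimp only at hfst hsnd
  calc f a * (1 + ((r : A × B).2 - f (r : A × B).1))
      = f a - f (a * (r : A × B).1) + f a * (r : A × B).2 := by rw [map_mul]; ring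
    _ = 0 := by rw [hfst, hsnd, sub_self, add_zero]

end amalg

theorem amalg_not_selfInjective_of_le_jacobson {A B : Type*} [CommRing A] [CommRing B]
    (f : A →+* B) (J : Ideal B) (hJ : (J : Set B) ⊆ Set.range f) (hJ0 : J ≠ ⊥)
    (hJrad : J ≤ Ideal.jacobson ⊥) : ¬ Module.Injective (amalg f J) (amalg f J) := by
  intro _
  obtain ⟨r, hr⟩ := Module.Injective.exists_eq_mul _ (amalg.projFst f J)
  have hunit : IsUnit (1 + ((r : A × B).2 - f (r : A × B).1)) := by
    simpa [add_comm] using Ideal.mem_jacobson_bot.1 (hJrad r.2) 1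
  refine hJ0 (eq_bot_iff.2 fun j hj => ?_)
  exact (Ideal.mem_bot).2 ((hunit.mul_left_eq_zero).1 (amalg.mul_one_add_eq_zero hr hJ hj))

theorem amalg_not_selfInjective_of_local_general {A B : Type*} [CommRing A] [CommRing B]
    [IsLocalRing B] (f : A →+* B) (J : Ideal B)
    (hJ : (J : Set B) ⊆ Set.range f) (hJ0 : J ≠ ⊥) (hJtop : J ≠ ⊤) :
    ¬ Module.Injective (amalg f J) (amalg f J) :=
  amalg_not_selfInjective_of_le_jacobson f J hJ hJ0
    ((IsLocalRing.le_maximalIdeal hJtop).trans (IsLocalRing.maximalIdeal_le_jacobson ⊥))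

/-- If `B` is local, `f` injective and `J` a nonzero proper ideal of `B` with
`J ⊆ f(A)`, then `A⋈^f J` is never self-injective. -/
theorem amalg_not_selfInjective_of_local {A B : Type*} [CommRing A] [CommRing B]
    [IsLocalRing B] (f : A →+* B) (J : Ideal B) (hf : Function.Injective f)
    (hJ : (J : Set B) ⊆ Set.range f) (hJ0 : J ≠ ⊥) (hJtop : J ≠ ⊤) :
    ¬ Module.Injective (amalg f J) (amalg f J) :=
  amalg_not_selfInjective_of_local_general f J hJ hJ0 hJtop
end

section
/- Let A be a commutative ring and I an ideal of A. The amalgamated duplication A⋈I = {(a, a+i) : a ∈ A, i ∈ I} is self-injective if and only if A is self-injective and there exists an idempotent e ∈ A with I = eA. -/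
set_option synthInstance.maxHeartbeats 1000000
set_option maxHeartbeats 1000000

/-!
If `I = eA` with `e` idempotent, then `(a, b) ↦ (a, b mod (1 - e))` identifies `A⋈I` with
`A × A/(1 - e)A`, while `A ≅ A/eA × A/(1 - e)A`; and a product ring is self-injective exactly when
both factors are, as one sees from Baer's criterion in the form "every homomorphism from an ideal
into the ring is a multiplication". Conversely, if `A⋈I` is self-injective, extending
`(i, j) ↦ (0, j)` from the ideal of pairs in `I × I` to a multiplication by some `(a, b) ∈ A⋈I`
gives `e = b - a ∈ I` with `e * i = i` for all `i ∈ I`, so that `I = eA` with `e` idempotent.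
-/

universe u v

namespace Module.Injective

theorem self_iff_of_ringEquiv {R : Type u} {S : Type v} [Ring R] [Ring S] (e : R ≃+* S) :
    Module.Injective R R ↔ Module.Injective S S :=
  ⟨fun _ => .of_ringEquiv e e.toSemilinearEquiv,
    fun _ => .of_ringEquiv e.symm e.symm.toSemilinearEquiv⟩

theorem self_iff_forall_exists_mul {R : Type u} [CommRing R] :
    Module.Injective R R ↔
      ∀ (J : Ideal R) (g : J →ₗ[R] R), ∃ r : R, ∀ x : J, g x = r * x := by
  rw [← Module.Baer.iff_injective]
  refine ⟨fun h J g => ?_, fun h J g => ?_⟩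
  · obtain ⟨g', hg'⟩ := h J g
    refine ⟨g' 1, fun x => ?_⟩
    rw [← hg' x x.2, mul_comm, ← smul_eq_mul, ← g'.map_smul, smul_eq_mul, mul_one]
  · obtain ⟨r, hr⟩ := h J g
    exact ⟨LinearMap.mulLeft R r, fun x hx => (hr ⟨x, hx⟩).symm⟩

variable {R : Type u} {S : Type v} [CommRing R] [CommRing S]

theorem self_of_self_prod (h : Module.Injective (R × S) (R × S)) : Module.Injective R R := by
  rw [self_iff_forall_exists_mul] at h ⊢
  intro J g
  let G : J.prod (⊥ : Ideal S) →ₗ[R × S] R × S :=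
    { toFun := fun k => (g ⟨k.1.1, ((Ideal.mem_prod _ _).1 k.2).1⟩, 0)
      map_add' := fun k l => by
        ext
        · exact g.map_add ⟨k.1.1, _⟩ ⟨l.1.1, _⟩
        · simp
      map_smul' := fun c k => by
        ext
        · exact g.map_smul c.1 ⟨k.1.1, _⟩
        · simp }
  obtain ⟨ρ, hρ⟩ := h _ G
  exact ⟨ρ.1, fun x =>
    congrArg Prod.fst (hρ ⟨(x, 0), (Ideal.mem_prod _ _).2 ⟨x.2, Submodule.zero_mem _⟩⟩)⟩

theorem self_prod_of_self
    (hR : Module.Injective R R) (hS : Module.Injective S S) :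
    Module.Injective (R × S) (R × S) := by
  rw [self_iff_forall_exists_mul] at hR hS ⊢
  intro K g
  have hK := Ideal.ideal_prod_eq K
  have mem_fst : ∀ x ∈ K.map (RingHom.fst R S), ((x, 0) : R × S) ∈ K := fun x hx => by
    rw [hK]; exact (Ideal.mem_prod _ _).2 ⟨hx, Submodule.zero_mem _⟩
  have mem_snd : ∀ y ∈ K.map (RingHom.snd R S), ((0, y) : R × S) ∈ K := fun y hy => by
    rw [hK]; exact (Ideal.mem_prod _ _).2 ⟨Submodule.zero_mem _, hy⟩
  let g₁ : K.map (RingHom.fst R S) →ₗ[R] R :=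
    { toFun := fun x => (g ⟨(x, 0), mem_fst x x.2⟩).1
      map_add' := fun x y => by
        rw [← Prod.fst_add, ← map_add]; congr 3; simp
      map_smul' := fun r x => by
        have e : (⟨(r * x, 0), mem_fst _ (r • x).2⟩ : K) =
            ((r, 0) : R × S) • ⟨(x, 0), mem_fst x x.2⟩ := Subtype.ext (by simp)
        simp only [Submodule.coe_smul, smul_eq_mul, e, map_smul]
        rfl }
  let g₂ : K.map (RingHom.snd R S) →ₗ[S] S :=
    { toFun := fun y => (g ⟨(0, y), mem_snd y y.2⟩).2
      map_add' := fun x y => by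
        rw [← Prod.snd_add, ← map_add]; congr 3; simp
      map_smul' := fun s y => by
        have e : (⟨(0, s * y), mem_snd _ (s • y).2⟩ : K) =
            ((0, s) : R × S) • ⟨(0, y), mem_snd y y.2⟩ := Subtype.ext (by simp)
        simp only [Submodule.coe_smul, smul_eq_mul, e, map_smul]
        rfl }
  obtain ⟨r, hr⟩ := hR _ g₁
  obtain ⟨s, hs⟩ := hS _ g₂
  refine ⟨(r, s), fun ⟨(x, y), hk⟩ => ?_⟩
  have hx : x ∈ K.map (RingHom.fst R S) := Ideal.mem_map_of_mem (RingHom.fst R S) hk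
  have hy : y ∈ K.map (RingHom.snd R S) := Ideal.mem_map_of_mem (RingHom.snd R S) hk
  have e₁ : ((1, 0) : R × S) • (⟨(x, y), hk⟩ : K) = ⟨(x, 0), mem_fst x hx⟩ :=
    Subtype.ext (by simp)
  have e₂ : ((0, 1) : R × S) • (⟨(x, y), hk⟩ : K) = ⟨(0, y), mem_snd y hy⟩ :=
    Subtype.ext (by simp)
  ext
  · calc (g ⟨(x, y), hk⟩).1 = (((1, 0) : R × S) • g ⟨(x, y), hk⟩).1 := by simp
      _ = g₁ ⟨_, hx⟩ := by rw [← map_smul, e₁]; rfl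
      _ = _ := hr _
  · calc (g ⟨(x, y), hk⟩).2 = (((0, 1) : R × S) • g ⟨(x, y), hk⟩).2 := by simp
      _ = g₂ ⟨_, hy⟩ := by rw [← map_smul, e₂]; rfl
      _ = _ := hs _

theorem self_prod_iff :
    Module.Injective (R × S) (R × S) ↔ Module.Injective R R ∧ Module.Injective S S :=
  ⟨fun h => ⟨self_of_self_prod h,
      self_of_self_prod ((self_iff_of_ringEquiv (RingEquiv.prodComm (R := R) (S := S))).1 h)⟩,
    fun ⟨hR, hS⟩ => self_prod_of_self hR hS⟩

end Module.Injective

open Module.Injective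

theorem Ideal.isIdempotentElem_and_eq_span_of_mul_eq {R : Type*} [CommRing R] {I : Ideal R}
    {e : R} (he : e ∈ I) (h : ∀ i ∈ I, e * i = i) :
    IsIdempotentElem e ∧ I = Ideal.span {e} :=
  ⟨h e he, le_antisymm (fun i hi => Ideal.mem_span_singleton'.2 ⟨i, by rw [mul_comm, h i hi]⟩)
    ((Ideal.span_singleton_le_iff_mem I).2 he)⟩

namespace amalg

variable {A : Type*} [CommRing A]

theorem mem_id_iff {I : Ideal A} {x : A × A} : x ∈ amalg (RingHom.id A) I ↔ x.2 - x.1 ∈ I :=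
  Iff.rfl

theorem exists_mem_forall_mul_eq_of_injective {I : Ideal A}
    (h : Module.Injective (amalg (RingHom.id A) I) (amalg (RingHom.id A) I)) :
    ∃ e ∈ I, ∀ i ∈ I, e * i = i := by
  set R := amalg (RingHom.id A) I
  let L : Ideal R := I.comap (amalgFst (RingHom.id A) I)
  have snd_mem : ∀ z : L, ((z : R) : A × A).2 ∈ I := fun z => by
    simpa [amalgFst] using I.add_mem z.2 (mem_id_iff.1 (z : R).2)
  let F : L →ₗ[R] R :=
    { toFun := fun z => ⟨(0, ((z : R) : A × A).2), mem_id_iff.2 (by simpa using snd_mem z)⟩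
      map_add' := fun z w => Subtype.ext (by ext <;> simp)
      map_smul' := fun c z => Subtype.ext (by ext <;> simp) }
  obtain ⟨⟨⟨a, b⟩, hab⟩, hρ⟩ := self_iff_forall_exists_mul.1 h L F
  refine ⟨b - a, hab, fun i hi => ?_⟩
  have hρi := hρ ⟨⟨(i, i), mem_id_iff.2 (sub_self i ▸ I.zero_mem)⟩, hi⟩
  have ha : 0 = a * i := congrArg (fun z : R => (z : A × A).1) hρi
  have hb : i = b * i := congrArg (fun z : R => (z : A × A).2) hρi
  linear_combination ha - hb

def toProdQuotient (e : A) :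
    amalg (RingHom.id A) (Ideal.span {e}) →+* A × (A ⧸ Ideal.span {1 - e}) :=
  (amalgFst _ _).prod ((Ideal.Quotient.mk _).comp ((RingHom.snd A A).comp (amalg _ _).subtype))

theorem toProdQuotient_bijective {e : A} (he : IsIdempotentElem e) :
    Function.Bijective (toProdQuotient e) := by
  constructor
  · rw [injective_iff_map_eq_zero]
    rintro ⟨⟨a, b⟩, hab⟩ h
    obtain ⟨ha, hb⟩ := Prod.ext_iff.1 h
    change a = 0 at ha
    subst ha
    obtain ⟨c, rfl⟩ := Ideal.mem_span_singleton'.1 (Ideal.Quotient.eq_zero_iff_mem.1 hb)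
    obtain ⟨d, hd⟩ := Ideal.mem_span_singleton'.1 (mem_id_iff.1 hab)
    have hc : c * (1 - e) = 0 := by linear_combination (e - 1) * hd - (c + d) * he.eq
    exact Subtype.ext (Prod.ext rfl hc)
  · rintro ⟨a, q⟩
    obtain ⟨c, rfl⟩ := Ideal.Quotient.mk_surjective q
    have hmem : (a, (1 - e) * a + e * c) ∈ amalg (RingHom.id A) (Ideal.span {e}) :=
      mem_id_iff.2 (Ideal.mem_span_singleton'.2 ⟨c - a, by ring⟩)
    refine ⟨⟨_, hmem⟩, Prod.ext rfl (Ideal.Quotient.eq.2 ?_)⟩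
    change (1 - e) * a + e * c - c ∈ _
    exact Ideal.mem_span_singleton'.2 ⟨a - c, by ring⟩

noncomputable def equivProdQuotient {e : A} (he : IsIdempotentElem e) :
    amalg (RingHom.id A) (Ideal.span {e}) ≃+* A × (A ⧸ Ideal.span {1 - e}) :=
  RingEquiv.ofBijective _ (toProdQuotient_bijective he)

end amalg

/-- The amalgamated duplication `A⋈I` is self-injective iff `A` is
self-injective and `I = eA` for some idempotent `e`. -/
theorem duplication_selfInjective_iff {A : Type*} [CommRing A] (I : Ideal A) :
    Module.Injective (amalg (RingHom.id A) I) (amalg (RingHom.id A) I) ↔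
      Module.Injective A A ∧ ∃ e : A, IsIdempotentElem e ∧ I = Ideal.span {e} := by
  constructor
  · intro h
    obtain ⟨e, heI, hmul⟩ := amalg.exists_mem_forall_mul_eq_of_injective h
    obtain ⟨he, rfl⟩ := Ideal.isIdempotentElem_and_eq_span_of_mul_eq heI hmul
    have hprod := (self_iff_of_ringEquiv (amalg.equivProdQuotient he)).1 h
    exact ⟨(self_prod_iff.1 hprod).1, e, he, rfl⟩
  · rintro ⟨hA, e, he, rfl⟩
    have hsplit := (self_iff_of_ringEquiv (AlgEquiv.prodQuotientOfIsIdempotentElem A he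
      he.one_sub (add_sub_cancel e 1) he.mul_one_sub_self).toRingEquiv).1 hA
    exact (self_iff_of_ringEquiv (amalg.equivProdQuotient he)).2
      (self_prod_iff.2 ⟨hA, (self_prod_iff.1 hsplit).2⟩)
end

section
/- A commutative ring A is quasi-Frobenius if and only if A is Noetherian and Ann_A(Ann_A(J)) = J for every ideal J of A. -/
/-!
Both directions go through finitely generated ideals, built up from principal ones by sums, and
both rest on the identity `Ann (I ∩ J) = Ann I + Ann J`.

If `A` is self-injective and `x ∈ Ann (I ∩ J)`, then `i + j ↦ x i` is a well-defined map
`I + J → A`; it is multiplication by some `c`, so `x = (x - c) + c ∈ Ann I + Ann J`. The same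
extension argument gives `Ann (Ann (a)) = (a)`, and `Ann (I + J) = Ann I ∩ Ann J` then propagates
`Ann (Ann J) = J` along sums.

Conversely, if `Ann (Ann J) = J` for all `J`, applying `Ann` to `Ann (Ann I + Ann J) = I ∩ J` gives
the identity.
Maps `I → A` and `J → A` given by multiplication by `c` and `d` agree on `I ∩ J`, so
`c - d = u + v ∈ Ann I + Ann J`, and multiplication by `c - u = d + v` glues them on `I + J`.
With the principal case this verifies Baer's criterion.
-/

def IsQuasiFrobenius (A : Type*) [CommRing A] : Prop :=
  IsNoetherianRing A ∧ Module.Injective A A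

open Submodule (mem_annihilator annihilator_sup)

section

variable {A : Type*} [CommRing A]

theorem Module.Injective.exists_mul_eq_of_ker_le [Module.Injective A A] {M : Type*}
    [AddCommGroup M] [Module A M] {f g : M →ₗ[A] A} (h : LinearMap.ker f ≤ LinearMap.ker g) :
    ∃ c : A, ∀ m, g m = f m * c := by
  obtain ⟨e, he⟩ := Module.Injective.extension_property A A _ A
    ((LinearMap.ker f).liftQ f le_rfl)
    (LinearMap.ker_eq_bot.1 (Submodule.ker_liftQ_eq_bot _ _ _ le_rfl))
    ((LinearMap.ker f).liftQ g h)
  refine ⟨e 1, fun m => ?_⟩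
  have hm := LinearMap.congr_fun he (Submodule.Quotient.mk m)
  simp only [LinearMap.coe_comp, Function.comp_apply, Submodule.liftQ_apply] at hm
  rw [← hm, ← smul_eq_mul, ← map_smul, smul_eq_mul, mul_one]

namespace Ideal

theorem le_annihilator_annihilator (J : Ideal A) : J ≤ J.annihilator.annihilator :=
  Submodule.le_annihilator_iff.2 <| by
    rw [smul_eq_mul, mul_comm]
    exact Submodule.annihilator_smul J

section SelfInjective

variable [Module.Injective A A]

theorem annihilator_annihilator_span_singleton (a : A) :
    (span {a}).annihilator.annihilator = span {a} := by
  refine le_antisymm (fun x hx => ?_) (le_annihilator_annihilator _)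
  have hker : LinearMap.ker (LinearMap.toSpanSingleton A A a) ≤
      LinearMap.ker (LinearMap.toSpanSingleton A A x) := by
    intro r hr
    have hr' : r ∈ (span {a}).annihilator := Submodule.mem_annihilator_span_singleton _ _ |>.2 hr
    simpa [mul_comm] using mem_annihilator.1 hx r hr'
  obtain ⟨c, hc⟩ := Module.Injective.exists_mul_eq_of_ker_le hker
  exact mem_span_singleton'.2 ⟨c, by simpa [mul_comm] using (hc 1).symm⟩

theorem annihilator_inf (I J : Ideal A) :
    (I ⊓ J).annihilator = I.annihilator ⊔ J.annihilator := by
  refine le_antisymm (fun x hx => ?_) <|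
    sup_le (Submodule.annihilator_mono inf_le_left) (Submodule.annihilator_mono inf_le_right)
  let f : I × J →ₗ[A] A := I.subtype.coprod J.subtype
  let g : I × J →ₗ[A] A := x • (I.subtype ∘ₗ LinearMap.fst A I J)
  have hker : LinearMap.ker f ≤ LinearMap.ker g := by
    rintro ⟨⟨i, hi⟩, ⟨j, hj⟩⟩ hij
    have hij : i + j = 0 := hij
    have hiJ : i ∈ J := by simpa [eq_neg_of_add_eq_zero_left hij] using J.neg_mem hj
    exact mem_annihilator.1 hx i ⟨hi, hiJ⟩
  obtain ⟨c, hc⟩ := Module.Injective.exists_mul_eq_of_ker_le hker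
  have hcJ : c ∈ J.annihilator := mem_annihilator.2 fun j hj => by
    simpa [g, f, mul_comm] using (hc (0, ⟨j, hj⟩)).symm
  have hxcI : x - c ∈ I.annihilator := mem_annihilator.2 fun i hi => by
    rw [smul_eq_mul, sub_mul, sub_eq_zero, mul_comm c]
    simpa [g, f] using hc (⟨i, hi⟩, 0)
  simpa using Submodule.add_mem_sup hxcI hcJ

theorem annihilator_annihilator_of_fg {J : Ideal A} (hJ : J.FG) :
    J.annihilator.annihilator = J := by
  induction J, hJ using Submodule.fg_induction with
  | singleton a => exact annihilator_annihilator_span_singleton a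
  | sup I J _ _ hI hJ => rw [annihilator_sup, annihilator_inf, hI, hJ]

end SelfInjective

/-- Baer's extension condition for the module `A` at the single ideal `J`. -/
def IsBaer (J : Ideal A) : Prop :=
  ∀ g : J →ₗ[A] A, ∃ c : A, ∀ x (hx : x ∈ J), g ⟨x, hx⟩ = x * c

theorem annihilator_inf_of_forall_annihilator_annihilator
    (hA : ∀ J : Ideal A, J.annihilator.annihilator = J) (I J : Ideal A) :
    (I ⊓ J).annihilator = I.annihilator ⊔ J.annihilator :=
  calc (I ⊓ J).annihilator
      = (I.annihilator.annihilator ⊓ J.annihilator.annihilator).annihilator := by rw [hA, hA]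
    _ = (I.annihilator ⊔ J.annihilator).annihilator.annihilator := by rw [annihilator_sup]
    _ = I.annihilator ⊔ J.annihilator := hA _

theorem isBaer_span_singleton {a : A} (ha : (span {a}).annihilator.annihilator = span {a}) :
    (span {a}).IsBaer := by
  intro g
  have haa : a ∈ span {a} := mem_span_singleton_self a
  have hmul : ∀ t : A, g ⟨t * a, mul_mem_left _ t haa⟩ = t * g ⟨a, haa⟩ := fun t =>
    g.map_smul t ⟨a, haa⟩
  have hy : g ⟨a, haa⟩ ∈ (span {a}).annihilator.annihilator := mem_annihilator.2 fun r hr => by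
    have hra : r * a = 0 := Submodule.mem_annihilator_span_singleton _ _ |>.1 hr
    rw [smul_eq_mul, mul_comm, ← hmul]
    simp only [hra]
    exact map_zero g
  obtain ⟨c, hc⟩ := mem_span_singleton'.1 (ha ▸ hy)
  refine ⟨c, fun x hx => ?_⟩
  obtain ⟨t, rfl⟩ := mem_span_singleton'.1 hx
  rw [hmul, ← hc]
  ring

theorem IsBaer.sup {I J : Ideal A}
    (hIJ : (I ⊓ J).annihilator = I.annihilator ⊔ J.annihilator)
    (hI : I.IsBaer) (hJ : J.IsBaer) : (I ⊔ J).IsBaer := by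
  intro g
  obtain ⟨c, hc⟩ := hI (g ∘ₗ Submodule.inclusion le_sup_left)
  obtain ⟨d, hd⟩ := hJ (g ∘ₗ Submodule.inclusion le_sup_right)
  have hcd : c - d ∈ (I ⊓ J).annihilator := mem_annihilator.2 fun z ⟨hzI, hzJ⟩ => by
    have := (hc z hzI).symm.trans (hd z hzJ)
    rw [smul_eq_mul, sub_mul, mul_comm, this, mul_comm, sub_self]
  rw [hIJ] at hcd
  obtain ⟨u, hu, v, hv, huv⟩ := Submodule.mem_sup.1 hcd
  refine ⟨c - u, fun x hx => ?_⟩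
  obtain ⟨i, hi, j, hj, rfl⟩ := Submodule.mem_sup.1 hx
  have hiu : u * i = 0 := mem_annihilator.1 hu i hi
  have hjv : v * j = 0 := mem_annihilator.1 hv j hj
  calc g ⟨i + j, hx⟩
      = (g ∘ₗ Submodule.inclusion le_sup_left) ⟨i, hi⟩ +
        (g ∘ₗ Submodule.inclusion le_sup_right) ⟨j, hj⟩ :=
          g.map_add (Submodule.inclusion le_sup_left ⟨i, hi⟩)
            (Submodule.inclusion le_sup_right ⟨j, hj⟩)
    _ = i * c + j * d := by rw [hc i hi, hd j hj]
    _ = (i + j) * (c - u) := by linear_combination j * huv + hiu - hjv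

theorem isBaer_of_fg (hA : ∀ J : Ideal A, J.annihilator.annihilator = J) {J : Ideal A}
    (hJ : J.FG) : J.IsBaer := by
  induction J, hJ using Submodule.fg_induction with
  | singleton a => exact isBaer_span_singleton (hA _)
  | sup I J _ _ hI hJ => exact hI.sup (annihilator_inf_of_forall_annihilator_annihilator hA I J) hJ

theorem _root_.Module.baer_self_of_forall_isBaer (h : ∀ J : Ideal A, J.IsBaer) :
    Module.Baer A A := fun J g => by
  obtain ⟨c, hc⟩ := h J g
  exact ⟨LinearMap.toSpanSingleton A A c, fun x hx => (hc x hx).symm⟩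

end Ideal

end

/-- `A` is quasi-Frobenius iff `A` is Noetherian and
`Ann_A(Ann_A(J)) = J` for every ideal `J` of `A`. -/
theorem quasiFrobenius_iff_double_annihilator (A : Type*) [CommRing A] :
    IsQuasiFrobenius A ↔
      (IsNoetherianRing A ∧ ∀ J : Ideal A, J.annihilator.annihilator = J) := by
  constructor
  · rintro ⟨hN, _⟩
    exact ⟨hN, fun J => Ideal.annihilator_annihilator_of_fg (IsNoetherian.noetherian J)⟩
  · rintro ⟨hN, hA⟩
    refine ⟨hN, Module.Baer.injective <| Module.baer_self_of_forall_isBaer fun J => ?_⟩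
    exact Ideal.isBaer_of_fg hA (IsNoetherian.noetherian J)
end

section
/- Let B be a local ring, f : A → B an injective ring homomorphism, and J a nonzero proper ideal of B with J ⊆ f(A). Then A⋈^f J is not quasi-Frobenius. -/
lemma exists_mul_of_ann_le' {R : Type*} [CommRing R] (hinj : Module.Injective R R)
    (z y : R) (h : ∀ r : R, r * z = 0 → r * y = 0) : ∃ r : R, y = r * z := by
  set φ : R →ₗ[R] R := LinearMap.toSpanSingleton R R z with hφ
  set ψ : R →ₗ[R] R := LinearMap.toSpanSingleton R R y with hψ
  have hker : LinearMap.ker φ ≤ LinearMap.ker ψ := by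
    intro r hr
    simp only [hφ, hψ, LinearMap.mem_ker, LinearMap.toSpanSingleton_apply,
      smul_eq_mul] at *
    exact h r hr
  let g : LinearMap.range φ →ₗ[R] R :=
    (Submodule.liftQ (LinearMap.ker φ) ψ hker).comp φ.quotKerEquivRange.symm.toLinearMap
  obtain ⟨hext, hh⟩ := hinj.out (LinearMap.range φ).subtype
    (Submodule.injective_subtype _) g
  have hz : (⟨φ 1, LinearMap.mem_range_self φ 1⟩ : LinearMap.range φ) =
      φ.quotKerEquivRange (Submodule.Quotient.mk 1) := by
    ext; exact (LinearMap.quotKerEquivRange_apply_mk φ 1).symm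
  have key := hh ⟨φ 1, LinearMap.mem_range_self φ 1⟩
  rw [hz] at key
  simp only [g, LinearMap.comp_apply, LinearEquiv.coe_toLinearMap,
    LinearEquiv.symm_apply_apply, Submodule.liftQ_apply, Submodule.coe_subtype] at key
  rw [LinearMap.quotKerEquivRange_apply_mk] at key
  have h1 : hext z = y := by
    simpa [hφ, hψ, LinearMap.toSpanSingleton_apply] using key
  refine ⟨hext 1, ?_⟩
  have h2 : hext z = z * hext 1 := by
    have := map_smul hext z 1
    simpa using this
  rw [← h1, h2, mul_comm]

set_option synthInstance.maxHeartbeats 1000000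
set_option maxHeartbeats 1000000

/-- If `B` is local, `f` injective and `J` a nonzero proper ideal of `B`
with `J ⊆ f(A)`, then `A⋈^f J` is never quasi-Frobenius. -/
theorem amalg_not_quasiFrobenius_of_local {A B : Type*} [CommRing A] [CommRing B]
    [IsLocalRing B] (f : A →+* B) (J : Ideal B) (hf : Function.Injective f)
    (hJ : (J : Set B) ⊆ Set.range f) (hJ0 : J ≠ ⊥) (hJtop : J ≠ ⊤) :
    ¬ IsQuasiFrobenius (amalg f J) := by
  rintro ⟨-, hinj⟩
  obtain ⟨j, hjJ, hj0⟩ := (Submodule.ne_bot_iff J).mp hJ0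
  obtain ⟨i, hi⟩ := hJ hjJ
  have hzmem : ((i, j) : A × B) ∈ amalg f J := by
    show j - f i ∈ J; rw [hi]; simp
  have hymem : ((0, j) : A × B) ∈ amalg f J := by
    show j - f 0 ∈ J; simpa using hjJ
  set z : amalg f J := ⟨(i, j), hzmem⟩ with hzdef
  set y : amalg f J := ⟨(0, j), hymem⟩ with hydef
  have h : ∀ r : amalg f J, r * z = 0 → r * y = 0 := by
    rintro ⟨⟨c, d⟩, hr⟩ hrz
    have h2 : d * j = 0 := by
      have := congrArg (fun t : amalg f J => (t : A × B).2) hrz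
      simpa using this
    apply Subtype.ext
    apply Prod.ext
    · show c * 0 = 0; ring
    · exact h2
  obtain ⟨r, hry⟩ := exists_mul_of_ann_le' hinj z y h
  obtain ⟨⟨c, d⟩, hr⟩ := r
  have hval : ((0, j) : A × B) = (c * i, d * j) := congrArg Subtype.val hry
  have eq1 : c * i = 0 := (Prod.ext_iff.mp hval).1.symm
  have eq2 : j = d * j := (Prod.ext_iff.mp hval).2
  have hu : d - f c ∈ J := hr
  have hfc : f c * j = 0 := by
    rw [← hi, ← map_mul, eq1, map_zero]
  have eq3 : (1 - (d - f c)) * j = 0 := by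
    have : (1 - (d - f c)) * j = j - d * j + f c * j := by ring
    rw [this, ← eq2, hfc]; ring
  have hunit : IsUnit (1 - (d - f c)) :=
    IsLocalRing.isUnit_one_sub_self_of_mem_nonunits _
      (IsLocalRing.le_maximalIdeal hJtop hu)
  exact hj0 ((hunit.mul_right_eq_zero).mp eq3)
end

section
/- Let A be a commutative ring and I an ideal of A. The amalgamated duplication A⋈I is quasi-Frobenius if and only if A is quasi-Frobenius and there exists an idempotent e ∈ A with I = eA. -/
set_option synthInstance.maxHeartbeats 1000000
set_option maxHeartbeats 1000000

/-!
If `A ⋈ I` is self-injective, Baer's criterion applied to the `A ⋈ I`-linear map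
`I × I → A ⋈ I`, `(i, j) ↦ (i, 0)` yields `s ∈ A ⋈ I` with `i * s.1 = i` and `j * s.2 = 0` for
`i, j ∈ I`; then `e = s.1 - s.2 ∈ I` acts as the identity on `I`, so `I = eA` with `e` idempotent.
For an idempotent `e`, `A ⋈ eA ≃ A × A/(1 - e)`. Both `A/(1 - e) = A[1/e]` and
`A = (A × A/(1 - e))[1/(1, 0)]` are localizations, and localizations of Noetherian self-injective
rings are again such; finally a product of quasi-Frobenius rings is quasi-Frobenius, by Baer's
criterion applied coordinatewise.
-/

section QuasiFrobenius
variable {R S : Type*} [CommRing R] [CommRing S]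

theorem Module.injective_self_iff_forall_exists_eq_mul :
    Module.Injective R R ↔ ∀ (I : Ideal R) (g : I →ₗ[R] R), ∃ r : R, ∀ x : I, g x = x * r := by
  rw [← Module.Baer.iff_injective]
  refine ⟨fun h I g ↦ ?_, fun h I g ↦ ?_⟩
  · obtain ⟨g', hg'⟩ := h I g
    exact ⟨g' 1, fun x ↦ by rw [← hg' x x.2, ← smul_eq_mul, ← g'.map_smul, smul_eq_mul, mul_one]⟩
  · obtain ⟨r, hr⟩ := h I g
    exact ⟨LinearMap.toSpanSingleton R R r, fun x hx ↦ by simp [hr ⟨x, hx⟩]⟩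

attribute [local instance] RingHomInvPair.of_ringEquiv in
theorem IsQuasiFrobenius.of_ringEquiv (e : R ≃+* S) (h : IsQuasiFrobenius R) :
    IsQuasiFrobenius S :=
  have := h.1; have := h.2
  ⟨isNoetherianRing_of_ringEquiv R e, Module.Injective.of_ringEquiv e e.toSemilinearEquiv⟩

theorem IsQuasiFrobenius.of_isLocalization [Algebra R S] (M : Submonoid R) [IsLocalization M S]
    (h : IsQuasiFrobenius R) : IsQuasiFrobenius S :=
  have := h.1; have := h.2
  ⟨IsLocalization.isNoetherianRing M S h.1,
    Module.injective_of_isLocalizedModule M (Algebra.linearMap R S)⟩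

theorem IsQuasiFrobenius.fst (h : IsQuasiFrobenius (R × S)) : IsQuasiFrobenius R :=
  letI := (RingHom.fst R S).toAlgebra
  h.of_isLocalization (Submonoid.powers ((1, 0) : R × S))

theorem IsQuasiFrobenius.quotient_span_one_sub {e : R} (he : IsIdempotentElem e)
    (h : IsQuasiFrobenius R) : IsQuasiFrobenius (R ⧸ Ideal.span {1 - e}) :=
  have := IsLocalization.Away.quotient_of_isIdempotentElem he
  h.of_isLocalization (Submonoid.powers e)

theorem Ideal.mk_zero_mem_of_mem_map_fst {J : Ideal (R × S)} {a : R}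
    (ha : a ∈ J.map (RingHom.fst R S)) : ((a, 0) : R × S) ∈ J := by
  obtain ⟨x, hx, rfl⟩ := (Ideal.mem_map_iff_of_surjective _ Prod.fst_surjective).mp ha
  convert J.mul_mem_left ((1, 0) : R × S) hx using 1; ext <;> simp

theorem Ideal.zero_mk_mem_of_mem_map_snd {J : Ideal (R × S)} {b : S}
    (hb : b ∈ J.map (RingHom.snd R S)) : ((0, b) : R × S) ∈ J := by
  obtain ⟨x, hx, rfl⟩ := (Ideal.mem_map_iff_of_surjective _ Prod.snd_surjective).mp hb
  convert J.mul_mem_left ((0, 1) : R × S) hx using 1; ext <;> simp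

theorem exists_fst_apply_eq_mul (hR : Module.Injective R R) (J : Ideal (R × S))
    (g : J →ₗ[R × S] R × S) : ∃ r : R, ∀ x : J, (g x).1 = (x : R × S).1 * r := by
  let g₁ : J.map (RingHom.fst R S) →ₗ[R] R :=
    { toFun a := (g ⟨(a, 0), Ideal.mk_zero_mem_of_mem_map_fst a.2⟩).1
      map_add' a b := by
        rw [← Prod.fst_add, ← map_add]; congr 2; ext <;> simp
      map_smul' c a := by
        rw [RingHom.id_apply, smul_eq_mul, ← Prod.fst_mul (c, (0 : S)), ← smul_eq_mul, ← map_smul]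
        congr 2; ext <;> simp }
  obtain ⟨r, hr⟩ := Module.injective_self_iff_forall_exists_eq_mul.mp hR _ g₁
  refine ⟨r, fun x ↦ ?_⟩
  have hx : ((1, 0) : R × S) • x =
      ⟨((x : R × S).1, 0), Ideal.mk_zero_mem_of_mem_map_fst (Ideal.mem_map_of_mem _ x.2)⟩ := by
    ext <;> simp
  calc (g x).1 = (g (((1, 0) : R × S) • x)).1 := by simp
    _ = _ := by rw [hx]; exact hr ⟨_, Ideal.mem_map_of_mem _ x.2⟩

theorem exists_snd_apply_eq_mul (hS : Module.Injective S S) (J : Ideal (R × S))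
    (g : J →ₗ[R × S] R × S) : ∃ s : S, ∀ x : J, (g x).2 = (x : R × S).2 * s := by
  let g₂ : J.map (RingHom.snd R S) →ₗ[S] S :=
    { toFun b := (g ⟨(0, b), Ideal.zero_mk_mem_of_mem_map_snd b.2⟩).2
      map_add' a b := by
        rw [← Prod.snd_add, ← map_add]; congr 2; ext <;> simp
      map_smul' c b := by
        rw [RingHom.id_apply, smul_eq_mul, ← Prod.snd_mul ((0 : R), c), ← smul_eq_mul, ← map_smul]
        congr 2; ext <;> simp }
  obtain ⟨s, hs⟩ := Module.injective_self_iff_forall_exists_eq_mul.mp hS _ g₂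
  refine ⟨s, fun x ↦ ?_⟩
  have hx : ((0, 1) : R × S) • x =
      ⟨(0, (x : R × S).2), Ideal.zero_mk_mem_of_mem_map_snd (Ideal.mem_map_of_mem _ x.2)⟩ := by
    ext <;> simp
  calc (g x).2 = (g (((0, 1) : R × S) • x)).2 := by simp
    _ = _ := by rw [hx]; exact hs ⟨_, Ideal.mem_map_of_mem _ x.2⟩

theorem IsQuasiFrobenius.prod (hR : IsQuasiFrobenius R) (hS : IsQuasiFrobenius S) :
    IsQuasiFrobenius (R × S) :=
  have := hR.1; have := hS.1
  ⟨inferInstance, Module.injective_self_iff_forall_exists_eq_mul.mpr fun J g ↦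
    have ⟨r, hr⟩ := exists_fst_apply_eq_mul hR.2 J g
    have ⟨s, hs⟩ := exists_snd_apply_eq_mul hS.2 J g
    ⟨(r, s), fun x ↦ Prod.ext (hr x) (hs x)⟩⟩

end QuasiFrobenius

section Duplication
variable {A : Type*} [CommRing A]

theorem mem_amalg_id {I : Ideal A} {x : A × A} : x ∈ amalg (RingHom.id A) I ↔ x.2 - x.1 ∈ I :=
  Iff.rfl

theorem IsIdempotentElem.eq_zero_of_mem_span_of_mem_span_one_sub {e x : A}
    (he : IsIdempotentElem e) (hx : x ∈ Ideal.span {e}) (hx' : x ∈ Ideal.span {1 - e}) :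
    x = 0 := by
  rw [← he.ker_toSpanSingleton_one_sub_eq_span, LinearMap.mem_ker] at hx
  rw [← he.ker_toSpanSingleton_eq_span, LinearMap.mem_ker] at hx'
  simp only [LinearMap.toSpanSingleton_apply, smul_eq_mul] at hx hx'
  linear_combination hx + hx'

theorem Ideal.isIdempotentElem_and_eq_span_of_forall_mul_eq {I : Ideal A} {e : A} (he : e ∈ I)
    (h : ∀ i ∈ I, i * e = i) : IsIdempotentElem e ∧ I = Ideal.span {e} :=
  ⟨h e he, le_antisymm (fun i hi ↦ Ideal.mem_span_singleton'.mpr ⟨i, h i hi⟩)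
    ((Ideal.span_singleton_le_iff_mem I).mpr he)⟩

noncomputable def amalgSpanIdempotentEquiv {e : A} (he : IsIdempotentElem e) :
    amalg (RingHom.id A) (Ideal.span {e}) ≃+* A × A ⧸ Ideal.span {1 - e} := by
  let φ := ((RingHom.fst A A).prod
    ((Ideal.Quotient.mk (Ideal.span {1 - e})).comp (RingHom.snd A A))).comp
      (amalg (RingHom.id A) (Ideal.span {e})).subtype
  refine RingEquiv.ofBijective φ ⟨(injective_iff_map_eq_zero φ).mpr ?_, ?_⟩
  · rintro ⟨⟨a, b⟩, hab⟩ h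
    simp only [φ, RingHom.coe_comp, Function.comp_apply, RingHom.prod_apply, Prod.mk_eq_zero,
      Ideal.Quotient.eq_zero_iff_mem] at h
    obtain ⟨rfl, hb⟩ := h
    obtain rfl : b = 0 :=
      he.eq_zero_of_mem_span_of_mem_span_one_sub (by simpa using mem_amalg_id.mp hab) hb
    rfl
  · rintro ⟨a, c⟩
    obtain ⟨c, rfl⟩ := Ideal.Quotient.mk_surjective c
    refine ⟨⟨(a, a + e * (c - a)), mem_amalg_id.mpr ?_⟩, ?_⟩
    · simpa using Ideal.mul_mem_right _ _ (Ideal.mem_span_singleton_self e)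
    · refine Prod.ext rfl ?_
      change Ideal.Quotient.mk _ (a + e * (c - a)) = Ideal.Quotient.mk _ c
      exact Ideal.Quotient.eq.mpr (Ideal.mem_span_singleton'.mpr ⟨a - c, by ring⟩)

theorem exists_mem_forall_mul_eq_self_of_injective_amalg (I : Ideal A)
    (h : Module.Injective (amalg (RingHom.id A) I) (amalg (RingHom.id A) I)) :
    ∃ e ∈ I, ∀ i ∈ I, i * e = i := by
  set D := amalg (RingHom.id A) I
  have fst_mem : ∀ {x : A × A}, x ∈ I.prod I → ((x.1, 0) : A × A) ∈ D := fun hx ↦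
    mem_amalg_id.mpr (by simpa using I.neg_mem hx.1)
  let W : Ideal D := (I.prod I).comap D.subtype
  let f : W →ₗ[D] D :=
    { toFun w := ⟨(((w : D) : A × A).1, 0), fst_mem w.2⟩
      map_add' v w := by ext <;> simp
      map_smul' c w := by ext <;> simp }
  obtain ⟨s, hs⟩ := Module.injective_self_iff_forall_exists_eq_mul.mp h W f
  have hW : ∀ {x : A × A} (hx : x ∈ I.prod I),
      (⟨x, mem_amalg_id.mpr (I.sub_mem hx.2 hx.1)⟩ : D) ∈ W := fun hx ↦ hx
  refine ⟨(s : A × A).1 - (s : A × A).2, ?_, fun i hi ↦ ?_⟩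
  · simpa using I.neg_mem (mem_amalg_id.mp s.2)
  · have h₁ := congrArg (fun x : D ↦ (x : A × A).1) (hs ⟨_, hW (x := (i, 0)) ⟨hi, I.zero_mem⟩⟩)
    have h₂ := congrArg (fun x : D ↦ (x : A × A).2) (hs ⟨_, hW (x := (0, i)) ⟨I.zero_mem, hi⟩⟩)
    simp only [LinearMap.coe_mk, AddHom.coe_mk, Subring.coe_mul, Prod.fst_mul, Prod.snd_mul, f]
      at h₁ h₂
    linear_combination h₂ - h₁

end Duplication

/-- The amalgamated duplication `A⋈I` is quasi-Frobenius iff `A` is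
quasi-Frobenius and `I = eA` for some idempotent `e ∈ A`. -/
theorem duplication_quasiFrobenius_iff {A : Type*} [CommRing A] (I : Ideal A) :
    IsQuasiFrobenius (amalg (RingHom.id A) I) ↔
      IsQuasiFrobenius A ∧ ∃ e : A, IsIdempotentElem e ∧ I = Ideal.span {e} := by
  constructor
  · intro h
    obtain ⟨e, heI, hunit⟩ := exists_mem_forall_mul_eq_self_of_injective_amalg I h.2
    obtain ⟨he, rfl⟩ := Ideal.isIdempotentElem_and_eq_span_of_forall_mul_eq heI hunit
    exact ⟨(h.of_ringEquiv (amalgSpanIdempotentEquiv he)).fst, e, he, rfl⟩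
  · rintro ⟨h, e, he, rfl⟩
    exact (h.prod (h.quotient_span_one_sub he)).of_ringEquiv (amalgSpanIdempotentEquiv he).symm
end
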